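/- Let n ≥ 1, t ≥ 1 be integers, let S be a t-PTMC in Λ_n, and suppose S is periodic with periods p_1,…,p_n ≥ 1, i.e. S + p_i e_i = S for all i ∈ {1,…,n}. Let k_1,…,k_n ≥ 1 be integers with m_i := k_i p_i ≥ 3 for all i, and let π : ℤ^n → ℤ/m_1ℤ × ⋯ × ℤ/m_nℤ be coordinatewise reduction. Then π(S) is a t-PTMC of the toroidal grid C_{m_1}□⋯□C_{m_n} with respect to the torus truncated distance. -/

import Mathlib

/-- The `n`-dimensional grid graph `Λ_n` on `ℤ^n`: two vertices are adjacent
iff their `ℓ1`-distance is `1`. -/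
def gridGraph (n : ℕ) : SimpleGraph (Fin n → ℤ) where
  Adj u v := ∑ i, |u i - v i| = 1
  symm := by
    constructor
    intro u v h
    beta_reduce at h ⊢
    have : ∑ i, |v i - u i| = ∑ i, |u i - v i| :=
      Finset.sum_congr rfl fun i _ => abs_sub_comm _ _
    rw [this]; exact h
  loopless := by
    constructor
    intro u h
    simp at h

/-- The truncated distance `ρ` on `ℤ^n` (valued in `ℕ`): the Hamming distance if
all coordinates differ by at most `1`, and `n+1` otherwise. -/
def trho (n : ℕ) (u v : Fin n → ℤ) : ℕ :=
  if ∀ i, |u i - v i| ≤ 1 then (Finset.univ.filter fun i => u i ≠ v i).card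
  else n + 1

/-- Truncated distance from a point to a set, as the infimum of truncated distances. -/
noncomputable def trhoSet (n : ℕ) (u : Fin n → ℤ) (S : Set (Fin n → ℤ)) : ℕ :=
  sInf {d | ∃ s ∈ S, trho n u s = d}

/-- The vertex set (in `ℤ^n`) of a connected component `H` of the subgraph of `Λ_n`
induced by `S`. -/
def compVerts (n : ℕ) (S : Set (Fin n → ℤ))
    (H : ((gridGraph n).induce S).ConnectedComponent) : Set (Fin n → ℤ) :=
  {v | ∃ h : v ∈ S, ((gridGraph n).induce S).connectedComponentMk ⟨v, h⟩ = H}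

/-- `S` is a `t`-perfect truncated-metric code in `Λ_n`. -/
def IsPTMC (n t : ℕ) (S : Set (Fin n → ℤ)) : Prop :=
  (∀ u : Fin n → ℤ, ∃! s, s ∈ S ∧ trho n u s = trhoSet n u S) ∧
  (∀ u : Fin n → ℤ, ∃! H : ((gridGraph n).induce S).ConnectedComponent,
    trhoSet n u (compVerts n S H) ≤ t)


/-- The toroidal grid `C_{m 0} □ ⋯ □ C_{m (n-1)}`: two vertices are adjacent iff they
differ in exactly one coordinate, by `±1` there. -/
def torusGraph (n : ℕ) (m : Fin n → ℕ) : SimpleGraph (Π i, ZMod (m i)) where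
  Adj u v := u ≠ v ∧ ∃ i, (v i = u i + 1 ∨ v i = u i - 1) ∧ ∀ j, j ≠ i → u j = v j
  symm := by
    constructor
    rintro u v ⟨hne, i, hi, hj⟩
    refine ⟨hne.symm, i, ?_, fun j hj' => (hj j hj').symm⟩
    rcases hi with h | h
    · right; rw [h]; ring
    · left; rw [h]; ring
  loopless := by
    constructor
    rintro u ⟨hne, -⟩
    exact hne rfl

/-- The torus truncated distance (valued in `ℕ`). -/
def ttrho (n : ℕ) (m : Fin n → ℕ) (u v : Π i, ZMod (m i)) : ℕ :=
  if ∀ i, u i = v i ∨ u i - v i = 1 ∨ u i - v i = -1 then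
    (Finset.univ.filter fun i => u i ≠ v i).card
  else n + 1

/-- Torus truncated distance from a point to a set. -/
noncomputable def ttrhoSet (n : ℕ) (m : Fin n → ℕ) (u : Π i, ZMod (m i))
    (S : Set (Π i, ZMod (m i))) : ℕ :=
  sInf {d | ∃ s ∈ S, ttrho n m u s = d}

/-- The vertex set of a connected component `H` of the subgraph of the toroidal grid
induced by `S`. -/
def tCompVerts (n : ℕ) (m : Fin n → ℕ) (S : Set (Π i, ZMod (m i)))
    (H : ((torusGraph n m).induce S).ConnectedComponent) : Set (Π i, ZMod (m i)) :=
  {v | ∃ h : v ∈ S, ((torusGraph n m).induce S).connectedComponentMk ⟨v, h⟩ = H}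

/-- `S` is a `t`-perfect truncated-metric code in the toroidal grid. -/
def IsTorusPTMC (n : ℕ) (m : Fin n → ℕ) (t : ℕ) (S : Set (Π i, ZMod (m i))) : Prop :=
  (∀ u : Π i, ZMod (m i), ∃! s, s ∈ S ∧ ttrho n m u s = ttrhoSet n m u S) ∧
  (∀ u : Π i, ZMod (m i), ∃! H : ((torusGraph n m).induce S).ConnectedComponent,
    ttrhoSet n m u (tCompVerts n m S H) ≤ t)


/-!
Write `π` for reduction modulo `m`. It never increases the truncated distance, and since every
`m i ≥ 3`, each torus distance `ρ(π u, π v)` is attained as `ρ(u, v')` by some `v' ≡ v (mod m)`: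
lift each coordinate of `π v` to the representative nearest to `u`. Periodicity makes `S` a
union of fibres of `π`, so such lifts stay in `S`; hence `ρ(π u, π(S)) = ρ(u, S)` and nearest
points and close components of `π(S)` lift to those of `S`. Finally `π` maps adjacent grid points
to adjacent torus points (again because `m i ≥ 3`), hence components of `S` into components of
`π(S)`, which gives uniqueness on the torus.
-/

open Pointwise

section IntCastZMod

variable {M : ℕ}

theorem intCast_eq_intCast_iff_of_abs_sub_lt {a b : ℤ} (h : |a - b| < M) :
    (a : ZMod M) = b ↔ a = b := by
  rw [ZMod.intCast_eq_intCast_iff_dvd_sub]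
  refine ⟨fun hdvd => ?_, fun hab => by rw [hab, sub_self]; exact dvd_zero _⟩
  have := Int.eq_zero_of_abs_lt_dvd hdvd (by rwa [abs_sub_comm])
  omega

theorem intCast_near_of_abs_sub_le_one {a b : ℤ} (h : |a - b| ≤ 1) :
    (a : ZMod M) = b ∨ (a : ZMod M) - b = 1 ∨ (a : ZMod M) - b = -1 := by
  obtain rfl | rfl | rfl : a = b ∨ a = b + 1 ∨ a = b - 1 := by rw [abs_le] at h; omega
  all_goals simp

theorem exists_intCast_eq_of_near {x y : ZMod M} (h : x = y ∨ x - y = 1 ∨ x - y = -1)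
    {a : ℤ} (ha : (a : ZMod M) = x) : ∃ b : ℤ, (b : ZMod M) = y ∧ |a - b| ≤ 1 := by
  rcases h with h | h | h
  · exact ⟨a, ha.trans h, by simp⟩
  · exact ⟨a - 1, by push_cast; rw [ha, ← h]; ring, by simp⟩
  · exact ⟨a + 1, by push_cast; rw [ha]; linear_combination h, by simp⟩

end IntCastZMod

section Periodic

variable {ι : Type*} [Fintype ι] [DecidableEq ι]

theorem vadd_set_eq_of_forall_mem_iff_add_mem {α : Type*} [AddCommGroup α] {S : Set α} {g : α}
    (h : ∀ v, v ∈ S ↔ v + g ∈ S) : g +ᵥ S = S := by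
  ext w
  rw [Set.mem_vadd_set_iff_neg_vadd_mem, vadd_eq_add, h, neg_add_cancel_comm]

theorem mem_closure_range_single_of_dvd {p x : ι → ℤ} (h : ∀ i, p i ∣ x i) :
    x ∈ AddSubgroup.closure (Set.range fun i => p i • Pi.single i (1 : ℤ)) := by
  choose c hc using h
  have hx : x = ∑ i, c i • p i • Pi.single i (1 : ℤ) := by
    ext j
    simp [Finset.sum_apply, Pi.single_apply, hc, mul_comm]
  rw [hx]
  exact AddSubgroup.sum_mem _ fun i _ =>
    AddSubgroup.zsmul_mem _ (AddSubgroup.subset_closure (Set.mem_range_self i)) _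

theorem mem_of_forall_dvd_sub_of_periodic {S : Set (ι → ℤ)} {p : ι → ℤ}
    (hper : ∀ i, ∀ v, v ∈ S ↔ v + p i • Pi.single i (1 : ℤ) ∈ S)
    {s v : ι → ℤ} (hs : s ∈ S) (hdvd : ∀ i, p i ∣ v i - s i) : v ∈ S := by
  have hstab : AddSubgroup.closure (Set.range fun i => p i • Pi.single i (1 : ℤ)) ≤
      AddAction.stabilizer (ι → ℤ) S := by
    rw [AddSubgroup.closure_le]
    rintro _ ⟨i, rfl⟩
    exact AddAction.mem_stabilizer_iff.mpr (vadd_set_eq_of_forall_mem_iff_add_mem (hper i))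
  have hvs : (v - s) +ᵥ S = S := AddAction.mem_stabilizer_iff.mp
    (hstab (mem_closure_range_single_of_dvd (x := v - s) hdvd))
  rw [← hvs]
  simpa using Set.vadd_mem_vadd_set (a := v - s) hs

end Periodic

section Reduction

variable {n : ℕ} {m : Fin n → ℕ}

def reduceMod (m : Fin n → ℕ) (v : Fin n → ℤ) : Π i, ZMod (m i) :=
  fun i => (v i : ZMod (m i))

theorem reduceMod_surjective (m : Fin n → ℕ) : Function.Surjective (reduceMod m) :=
  Function.Surjective.piMap fun _ => ZMod.intCast_surjective

theorem mem_of_reduceMod_eq_of_periodic {S : Set (Fin n → ℤ)} {p : Fin n → ℕ}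
    (hper : ∀ i : Fin n, ∀ v : Fin n → ℤ, v ∈ S ↔ v + (p i : ℤ) • Pi.single i (1 : ℤ) ∈ S)
    (hpm : ∀ i, p i ∣ m i) {s v : Fin n → ℤ} (hs : s ∈ S) (h : reduceMod m v = reduceMod m s) :
    v ∈ S :=
  mem_of_forall_dvd_sub_of_periodic hper hs fun i =>
    (Int.natCast_dvd_natCast.mpr (hpm i)).trans
      ((ZMod.intCast_eq_intCast_iff_dvd_sub _ _ _).mp (congrFun h i).symm)

theorem ttrho_le_succ (u v : Π i, ZMod (m i)) : ttrho n m u v ≤ n + 1 := by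
  unfold ttrho
  split
  · exact (Finset.card_filter_le _ _).trans (by simp)
  · exact le_rfl

theorem exists_abs_sub_eq_one_of_gridGraph_adj {u v : Fin n → ℤ} (h : (gridGraph n).Adj u v) :
    ∃ i, |u i - v i| = 1 ∧ ∀ j ≠ i, u j = v j := by
  have hsum : ∑ i, |u i - v i| = 1 := h
  have hnonneg : ∀ i ∈ Finset.univ, 0 ≤ |u i - v i| := fun i _ => abs_nonneg _
  obtain ⟨i, hi⟩ : ∃ i, u i ≠ v i := by
    by_contra! hall
    simp [hall] at hsum
  have hi1 : 1 ≤ |u i - v i| := Int.one_le_abs (sub_ne_zero.mpr hi)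
  have hi_le : |u i - v i| ≤ 1 := hsum ▸ Finset.single_le_sum hnonneg (Finset.mem_univ i)
  refine ⟨i, le_antisymm hi_le hi1, fun j hj => ?_⟩
  have hij := hsum ▸ Finset.add_le_sum hnonneg (Finset.mem_univ i) (Finset.mem_univ j) hj.symm
  have hj0 : |u j - v j| = 0 := le_antisymm (by linarith) (abs_nonneg _)
  exact sub_eq_zero.mp (abs_eq_zero.mp hj0)

variable (hm : ∀ i, 3 ≤ m i)
include hm

theorem ttrho_reduceMod_eq_trho {u v : Fin n → ℤ} (h : ∀ i, |u i - v i| ≤ 1) :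
    ttrho n m (reduceMod m u) (reduceMod m v) = trho n u v := by
  unfold ttrho trho reduceMod
  rw [if_pos fun i => intCast_near_of_abs_sub_le_one (h i), if_pos h]
  congr 1
  refine Finset.filter_congr fun i _ => not_congr (intCast_eq_intCast_iff_of_abs_sub_lt ?_)
  have := hm i
  linarith [h i]

theorem ttrho_reduceMod_le_trho (u v : Fin n → ℤ) :
    ttrho n m (reduceMod m u) (reduceMod m v) ≤ trho n u v := by
  by_cases h : ∀ i, |u i - v i| ≤ 1
  · exact (ttrho_reduceMod_eq_trho hm h).le
  · unfold trho
    rw [if_neg h]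
    exact ttrho_le_succ _ _

theorem exists_reduceMod_eq_trho_eq_ttrho (u v : Fin n → ℤ) :
    ∃ v', reduceMod m v' = reduceMod m v ∧
      trho n u v' = ttrho n m (reduceMod m u) (reduceMod m v) := by
  by_cases h : ∀ i, reduceMod m u i = reduceMod m v i ∨ reduceMod m u i - reduceMod m v i = 1 ∨
      reduceMod m u i - reduceMod m v i = -1
  · choose w hw using fun i => exists_intCast_eq_of_near (h i) (a := u i) rfl
    have hwv : reduceMod m w = reduceMod m v := funext fun i => (hw i).1
    exact ⟨w, hwv, by rw [← hwv, ttrho_reduceMod_eq_trho hm fun i => (hw i).2]⟩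
  · refine ⟨v, rfl, ?_⟩
    have hfar : ¬∀ i, |u i - v i| ≤ 1 := fun h' => h fun i => intCast_near_of_abs_sub_le_one (h' i)
    unfold trho ttrho
    rw [if_neg hfar, if_neg h]

theorem torusGraph_adj_reduceMod {u v : Fin n → ℤ} (h : (gridGraph n).Adj u v) :
    (torusGraph n m).Adj (reduceMod m u) (reduceMod m v) := by
  obtain ⟨i, hi, hj⟩ := exists_abs_sub_eq_one_of_gridGraph_adj h
  have hne : u i ≠ v i := fun h => by simp [h] at hi
  have hlt : |u i - v i| < m i := by rw [hi]; have := hm i; omega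
  refine ⟨fun heq => hne ((intCast_eq_intCast_iff_of_abs_sub_lt hlt).mp (congrFun heq i)), i, ?_,
    fun j hji => congrArg _ (hj j hji)⟩
  simp only [reduceMod]
  rcases (abs_eq zero_le_one).mp hi with h | h
  · right
    rw [show v i = u i - 1 by omega]
    push_cast; ring
  · left
    rw [show v i = u i + 1 by omega]
    push_cast; ring

def reduceModHom (S : Set (Fin n → ℤ)) :
    (gridGraph n).induce S →g (torusGraph n m).induce (reduceMod m '' S) where
  toFun x := ⟨reduceMod m x, Set.mem_image_of_mem _ x.2⟩
  map_rel' h := torusGraph_adj_reduceMod hm h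

end Reduction

section SetDistance

variable {n : ℕ}

theorem trhoSet_le_trho {u s : Fin n → ℤ} {T : Set (Fin n → ℤ)} (hs : s ∈ T) :
    trhoSet n u T ≤ trho n u s :=
  Nat.sInf_le ⟨s, hs, rfl⟩

theorem exists_trho_eq_trhoSet {u : Fin n → ℤ} {T : Set (Fin n → ℤ)} (hT : T.Nonempty) :
    ∃ s ∈ T, trho n u s = trhoSet n u T :=
  Nat.sInf_mem (hT.image _)

theorem compVerts_nonempty {S : Set (Fin n → ℤ)}
    (H : ((gridGraph n).induce S).ConnectedComponent) : (compVerts n S H).Nonempty := by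
  obtain ⟨⟨v, hv⟩, rfl⟩ := H.exists_rep
  exact ⟨v, hv, rfl⟩

variable {m : Fin n → ℕ}

theorem ttrhoSet_le_ttrho {u s : Π i, ZMod (m i)} {T : Set (Π i, ZMod (m i))} (hs : s ∈ T) :
    ttrhoSet n m u T ≤ ttrho n m u s :=
  Nat.sInf_le ⟨s, hs, rfl⟩

theorem exists_ttrho_eq_ttrhoSet {u : Π i, ZMod (m i)} {T : Set (Π i, ZMod (m i))}
    (hT : T.Nonempty) : ∃ s ∈ T, ttrho n m u s = ttrhoSet n m u T :=
  Nat.sInf_mem (hT.image _)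

theorem tCompVerts_nonempty {S : Set (Π i, ZMod (m i))}
    (H : ((torusGraph n m).induce S).ConnectedComponent) : (tCompVerts n m S H).Nonempty := by
  obtain ⟨⟨v, hv⟩, rfl⟩ := H.exists_rep
  exact ⟨v, hv, rfl⟩

end SetDistance

section ImageCode

variable {n t : ℕ} {m : Fin n → ℕ} {S : Set (Fin n → ℤ)} (hm : ∀ i, 3 ≤ m i)
  (hsat : ∀ s ∈ S, ∀ v, reduceMod m v = reduceMod m s → v ∈ S)
include hm hsat

theorem exists_mem_reduceMod_eq_trho_eq (u : Fin n → ℤ) {y : Π i, ZMod (m i)}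
    (hy : y ∈ reduceMod m '' S) :
    ∃ s ∈ S, reduceMod m s = y ∧ trho n u s = ttrho n m (reduceMod m u) y := by
  obtain ⟨v, hv, rfl⟩ := hy
  obtain ⟨v', hv', htr⟩ := exists_reduceMod_eq_trho_eq_ttrho hm u v
  exact ⟨v', hsat v hv v' hv', hv', htr⟩

theorem IsPTMC.existsUnique_nearest_reduceMod (hS : IsPTMC n t S) (u : Fin n → ℤ) :
    ∃! y, y ∈ reduceMod m '' S ∧
      ttrho n m (reduceMod m u) y = ttrhoSet n m (reduceMod m u) (reduceMod m '' S) := by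
  obtain ⟨s, ⟨hs, hs_near⟩, hs_uniq⟩ := hS.1 u
  have hs_img := Set.mem_image_of_mem (reduceMod m) hs
  have hs_le : ttrho n m (reduceMod m u) (reduceMod m s) ≤
      ttrhoSet n m (reduceMod m u) (reduceMod m '' S) := by
    obtain ⟨y, hy, hy_near⟩ := exists_ttrho_eq_ttrhoSet (u := reduceMod m u) ⟨_, hs_img⟩
    obtain ⟨s', hs', -, htr⟩ := exists_mem_reduceMod_eq_trho_eq hm hsat u hy
    calc ttrho n m (reduceMod m u) (reduceMod m s) ≤ trho n u s := ttrho_reduceMod_le_trho hm u s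
      _ = trhoSet n u S := hs_near
      _ ≤ trho n u s' := trhoSet_le_trho hs'
      _ = _ := htr.trans hy_near
  refine ⟨reduceMod m s, ⟨hs_img, le_antisymm hs_le (ttrhoSet_le_ttrho hs_img)⟩, ?_⟩
  rintro y ⟨hy, hy_near⟩
  obtain ⟨s', hs', rfl, htr⟩ := exists_mem_reduceMod_eq_trho_eq hm hsat u hy
  have hs'_near : trho n u s' = trhoSet n u S := by
    refine le_antisymm ?_ (trhoSet_le_trho hs')
    calc trho n u s' = ttrhoSet n m (reduceMod m u) (reduceMod m '' S) := htr.trans hy_near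
      _ ≤ ttrho n m (reduceMod m u) (reduceMod m s) := ttrhoSet_le_ttrho hs_img
      _ ≤ trho n u s := ttrho_reduceMod_le_trho hm u s
      _ = trhoSet n u S := hs_near
  rw [hs_uniq s' ⟨hs', hs'_near⟩]

theorem IsPTMC.existsUnique_component_reduceMod (hS : IsPTMC n t S) (u : Fin n → ℤ) :
    ∃! H, ttrhoSet n m (reduceMod m u) (tCompVerts n m (reduceMod m '' S) H) ≤ t := by
  obtain ⟨H, hH, hH_uniq⟩ := hS.2 u
  obtain ⟨s, ⟨hs, rfl⟩, hs_near⟩ := exists_trho_eq_trhoSet (u := u) (compVerts_nonempty H)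
  have hs_comp := SimpleGraph.ConnectedComponent.map_mk (reduceModHom hm S) ⟨s, hs⟩
  refine ⟨(((gridGraph n).induce S).connectedComponentMk ⟨s, hs⟩).map (reduceModHom hm S), ?_, ?_⟩
  · calc _ ≤ ttrho n m (reduceMod m u) (reduceMod m s) :=
          ttrhoSet_le_ttrho (T := tCompVerts n m _ _) ⟨Set.mem_image_of_mem _ hs, hs_comp.symm⟩
      _ ≤ trho n u s := ttrho_reduceMod_le_trho hm u s
      _ = _ := hs_near
      _ ≤ t := hH
  · intro H' hH'
    obtain ⟨y, ⟨hy, rfl⟩, hy_near⟩ :=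
      exists_ttrho_eq_ttrhoSet (u := reduceMod m u) (tCompVerts_nonempty H')
    obtain ⟨s', hs', rfl, htr⟩ := exists_mem_reduceMod_eq_trho_eq hm hsat u hy
    have hs'_comp := hH_uniq (((gridGraph n).induce S).connectedComponentMk ⟨s', hs'⟩)
      ((trhoSet_le_trho (T := compVerts n S _) ⟨hs', rfl⟩).trans ((htr.trans hy_near).trans_le hH'))
    rw [← hs'_comp, SimpleGraph.ConnectedComponent.map_mk]
    rfl

theorem IsPTMC.isTorusPTMC_image_reduceMod (hS : IsPTMC n t S) :
    IsTorusPTMC n m t (reduceMod m '' S) := by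
  refine ⟨fun y => ?_, fun y => ?_⟩ <;> obtain ⟨u, rfl⟩ := reduceMod_surjective m y
  exacts [hS.existsUnique_nearest_reduceMod hm hsat u,
    hS.existsUnique_component_reduceMod hm hsat u]

end ImageCode

theorem stmt_12_general (n t : ℕ) (S : Set (Fin n → ℤ))
    (hS : IsPTMC n t S) (p k : Fin n → ℕ)
    (hper : ∀ i : Fin n, ∀ v : Fin n → ℤ,
      v ∈ S ↔ v + (p i : ℤ) • Pi.single i (1 : ℤ) ∈ S)
    (hm : ∀ i, 3 ≤ k i * p i) :
    IsTorusPTMC n (fun i => k i * p i) t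
      ((fun v : Fin n → ℤ => fun i => ((v i : ℤ) : ZMod (k i * p i))) '' S) :=
  hS.isTorusPTMC_image_reduceMod hm fun _ hs _ hv =>
    mem_of_reduceMod_eq_of_periodic hper (fun i => dvd_mul_left (p i) (k i)) hs hv

/-- Coordinatewise reduction of a periodic `t`-PTMC of `Λ_n` with
periods `p i` yields a `t`-PTMC of the toroidal grid with circumferences `m i = k i * p i`
(each `≥ 3`). -/
theorem stmt_12 (n t : ℕ) (hn : 1 ≤ n) (ht : 1 ≤ t) (S : Set (Fin n → ℤ))
    (hS : IsPTMC n t S) (p k : Fin n → ℕ) (hp : ∀ i, 1 ≤ p i) (hk : ∀ i, 1 ≤ k i)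
    (hper : ∀ i : Fin n, ∀ v : Fin n → ℤ,
      v ∈ S ↔ v + (p i : ℤ) • Pi.single i (1 : ℤ) ∈ S)
    (hm : ∀ i, 3 ≤ k i * p i) :
    IsTorusPTMC n (fun i => k i * p i) t
      ((fun v : Fin n → ℤ => fun i => ((v i : ℤ) : ZMod (k i * p i))) '' S) :=
  stmt_12_general n t S hS p k hper hm
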